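/- Let n, m be natural numbers with m ≥ 1 and let H_1, …, H_m be affine hyperplanes in ℝ^n, i.e. for each k there is a nonzero linear functional f_k on ℝ^n and a real constant c_k with H_k = {x ∈ ℝ^n | f_k(x) = c_k}. For each subset I of {1, …, m}, let N(I) denote the cardinality of the set of connected components of (⋂_{k ∈ I} H_k) \ (⋃_{k ∉ I} H_k), with the convention that the intersection over the empty set is ℝ^n. Then the total number of extended regions satisfies ∑_{I ⊆ {1,…,m}} N(I) ≤ e² · mⁿ, where e is Euler's number. -/

import Mathlib

/-!
Each extended region is a union of the sign cells `{x | sign (f_k x - c_k) = σ_k for all k}`,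
which are convex; so it has at most as many connected components as there are sign vectors
realized in it, and the total count is at most the number `B m n` of sign vectors realized by
`m` affine functions on `ℝⁿ`. Adjoining a further function `a`, a sign vector of the first `m`
functions extends by the sign of `a`; the extensions by `0`, and the second extension of a vector
realized on both sides of `a = 0` (convexity of the cells again), come from sign vectors realized
on the hyperplane `a = 0`. Hence `B (m + 1) (n + 1) ≤ B m (n + 1) + 2 B m n`, which
`B m n = ∑_{i ≤ n} C(m, i) 2ⁱ` satisfies with equality, and `C(m, i) ≤ mⁱ / i!` gives
`B m n ≤ mⁿ ∑ 2ⁱ / i! ≤ e² mⁿ`.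
-/

open Set Module

def signVectorBound (m n : ℕ) : ℕ := ∑ i ∈ Finset.range (n + 1), m.choose i * 2 ^ i

@[simp]
lemma signVectorBound_zero_left (n : ℕ) : signVectorBound 0 n = 1 := by
  simp [signVectorBound, Finset.sum_range_succ', Nat.choose_zero_succ]

@[simp]
lemma signVectorBound_zero_right (m : ℕ) : signVectorBound m 0 = 1 := by
  simp [signVectorBound]

lemma signVectorBound_succ_succ (m n : ℕ) :
    signVectorBound (m + 1) (n + 1) = signVectorBound m (n + 1) + 2 * signVectorBound m n := by
  simp only [signVectorBound, Finset.sum_range_succ' _ (n + 1), Nat.choose_succ_succ', add_mul,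
    Finset.sum_add_distrib, Finset.mul_sum, Nat.choose_zero_right]
  ring_nf

lemma signVectorBound_mono_left {m m' : ℕ} (h : m ≤ m') (n : ℕ) :
    signVectorBound m n ≤ signVectorBound m' n :=
  Finset.sum_le_sum fun i _ => Nat.mul_le_mul_right _ (Nat.choose_le_choose i h)

lemma signVectorBound_le_exp_two_mul_pow {m : ℕ} (hm : 1 ≤ m) (n : ℕ) :
    (signVectorBound m n : ℝ) ≤ Real.exp 2 * m ^ n := by
  have hm' : (1 : ℝ) ≤ m := by exact_mod_cast hm
  calc (signVectorBound m n : ℝ)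
      = ∑ i ∈ Finset.range (n + 1), (m.choose i : ℝ) * 2 ^ i := by
        simp [signVectorBound]
    _ ≤ ∑ i ∈ Finset.range (n + 1), (m : ℝ) ^ n * (2 ^ i / i.factorial) := by
        refine Finset.sum_le_sum fun i hi => ?_
        have hin : i ≤ n := Nat.lt_succ_iff.mp (Finset.mem_range.mp hi)
        calc (m.choose i : ℝ) * 2 ^ i ≤ (m : ℝ) ^ i / i.factorial * 2 ^ i := by
              gcongr; exact Nat.choose_le_pow_div i m
          _ = (m : ℝ) ^ i * (2 ^ i / i.factorial) := by ring
          _ ≤ (m : ℝ) ^ n * (2 ^ i / i.factorial) := by gcongr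
    _ = (m : ℝ) ^ n * ∑ i ∈ Finset.range (n + 1), (2 : ℝ) ^ i / i.factorial := by
        rw [Finset.mul_sum]
    _ ≤ (m : ℝ) ^ n * Real.exp 2 := by
        gcongr; exact Real.sum_le_exp_of_nonneg zero_le_two _
    _ = Real.exp 2 * m ^ n := mul_comm _ _

lemma AffineMap.exists_range_eq_preimage_singleton {k V W : Type*} [Ring k] [AddCommGroup V]
    [Module k V] [AddCommGroup W] [Module k W] (a : V →ᵃ[k] W) {q : W} (hq : q ∈ range a) :
    ∃ e : LinearMap.ker a.linear →ᵃ[k] V, range e = a ⁻¹' {q} := by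
  obtain ⟨x₀, rfl⟩ := hq
  refine ⟨(LinearMap.ker a.linear).subtype.toAffineMap + AffineMap.const k _ x₀, ?_⟩
  ext x
  simp only [mem_range, AffineMap.coe_add, LinearMap.coe_toAffineMap, AffineMap.coe_const,
    Pi.add_apply, Submodule.coe_subtype, Function.const_apply, Subtype.exists,
    LinearMap.mem_ker, exists_prop, mem_preimage, mem_singleton_iff]
  constructor
  · rintro ⟨u, hu, rfl⟩
    rw [← vadd_eq_add, AffineMap.map_vadd, hu, zero_vadd]
  · intro hx
    refine ⟨x - x₀, ?_, sub_add_cancel x x₀⟩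
    rw [← vsub_eq_sub, AffineMap.linearMap_vsub, hx, vsub_self]

lemma ConnectedComponents.exists_surjective_of_isPreconnected_preimage {X β : Type*}
    [TopologicalSpace X] (Φ : X → β) (hΦ : ∀ x, IsPreconnected (Φ ⁻¹' {Φ x})) :
    ∃ g : range Φ → ConnectedComponents X, Function.Surjective g := by
  refine ⟨fun σ => ConnectedComponents.mk σ.2.choose, ?_⟩
  rintro ⟨x⟩
  let σ : range Φ := ⟨Φ x, x, rfl⟩
  exact ⟨σ, ConnectedComponents.coe_eq_coe'.mpr
    ((hΦ x).subset_connectedComponent rfl σ.2.choose_spec)⟩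

lemma Set.ncard_eq_sum_ncard_inter_preimage_singleton {α β : Type*} [Fintype β] {s : Set α}
    (hs : s.Finite) (g : α → β) : s.ncard = ∑ b, (s ∩ g ⁻¹' {b}).ncard := by
  conv_lhs => rw [← inter_univ s, ← preimage_univ (f := g), ← iUnion_of_singleton,
    preimage_iUnion, inter_iUnion]
  rw [ncard_iUnion_of_finite (fun _ => hs.inter_of_left _), finsum_eq_sum_of_fintype]
  exact fun b b' hbb' => (pairwise_disjoint_fiber g hbb').inter_left' s |>.inter_right' s

section SignVector

variable {ι V : Type*} [AddCommGroup V] [Module ℝ V]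

noncomputable def signVector (ℓ : ι → V →ᵃ[ℝ] ℝ) (x : V) : ι → SignType :=
  fun k => SignType.sign (ℓ k x)

lemma convex_setOf_sign_eq (s : SignType) : Convex ℝ {r : ℝ | SignType.sign r = s} := by
  rcases s.trichotomy with rfl | rfl | rfl
  · simp only [sign_eq_neg_one_iff]
    exact convex_Iio 0
  · simp
  · simp only [sign_eq_one_iff]
    exact convex_Ioi 0

lemma convex_signVector_preimage_singleton (ℓ : ι → V →ᵃ[ℝ] ℝ) (σ : ι → SignType) :
    Convex ℝ (signVector ℓ ⁻¹' {σ}) := by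
  have : signVector ℓ ⁻¹' {σ} = ⋂ k, ℓ k ⁻¹' {r | SignType.sign r = σ k} := by
    ext x; simp [signVector, funext_iff]
  rw [this]
  exact convex_iInter fun k => (convex_setOf_sign_eq (σ k)).affine_preimage (ℓ k)

lemma signVector_image_pos_inter_neg_subset (ℓ : ι → V →ᵃ[ℝ] ℝ) (a : V →ᵃ[ℝ] ℝ) :
    signVector ℓ '' {x | 0 < a x} ∩ signVector ℓ '' {x | a x < 0} ⊆
      signVector ℓ '' {x | a x = 0} := by
  rintro σ ⟨⟨x, hx, rfl⟩, y, hy, hyx⟩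
  have hconv := ((convex_signVector_preimage_singleton ℓ (signVector ℓ x)).affine_image a)
  obtain ⟨z, hz, haz⟩ := (convex_iff_ordConnected.mp hconv).out ⟨y, hyx, rfl⟩ ⟨x, rfl, rfl⟩
    ⟨le_of_lt hy, le_of_lt hx⟩
  exact ⟨z, haz, hz⟩

lemma exists_surjective_connectedComponents_of_eq_signVector_preimage [TopologicalSpace V]
    [ContinuousAdd V] [ContinuousSMul ℝ V] (ℓ : ι → V →ᵃ[ℝ] ℝ) {S : Set V}
    {T : Set (ι → SignType)} (hS : S = signVector ℓ ⁻¹' T) :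
    ∃ g : ↥(range (signVector ℓ) ∩ T) → ConnectedComponents S, Function.Surjective g := by
  have hrange : range (signVector ℓ ∘ Subtype.val : S → ι → SignType) =
      range (signVector ℓ) ∩ T := by
    rw [range_comp, Subtype.range_coe, hS, image_preimage_eq_range_inter]
  rw [← hrange]
  refine ConnectedComponents.exists_surjective_of_isPreconnected_preimage _ fun x => ?_
  have hsub : signVector ℓ ⁻¹' {signVector ℓ x} ⊆ S := fun y (hy : signVector ℓ y = _) => by
    rw [hS, mem_preimage, hy, ← mem_preimage, ← hS]
    exact x.2
  rw [preimage_comp, ← Topology.IsInducing.subtypeVal.isPreconnected_image,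
    Subtype.image_preimage_coe, Function.comp_apply, inter_eq_right.mpr hsub]
  exact (convex_signVector_preimage_singleton ℓ _).isPreconnected

lemma ncard_range_signVector_le_of_linear_eq_zero {m : ℕ} (ℓ : Fin (m + 1) → V →ᵃ[ℝ] ℝ)
    (h : (ℓ (Fin.last m)).linear = 0) :
    (range (signVector ℓ)).ncard ≤ (range (signVector (Fin.init ℓ))).ncard := by
  obtain ⟨q, hq⟩ := (AffineMap.linear_eq_zero_iff_exists_const _).mp h
  have : signVector ℓ = (fun τ => Fin.snoc τ (SignType.sign q)) ∘ signVector (Fin.init ℓ) := by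
    funext x k
    refine Fin.lastCases ?_ (fun i => ?_) k <;> simp [signVector, hq, Fin.init]
  rw [this, range_comp]
  exact ncard_image_le (toFinite _)

lemma ncard_range_signVector_succ_le {m : ℕ} (ℓ : Fin (m + 1) → V →ᵃ[ℝ] ℝ) :
    (range (signVector ℓ)).ncard ≤ (range (signVector (Fin.init ℓ))).ncard +
      2 * (signVector (Fin.init ℓ) '' {x | ℓ (Fin.last m) x = 0}).ncard := by
  set a := ℓ (Fin.last m)
  set A : Set V → Set (Fin m → SignType) := fun s => signVector (Fin.init ℓ) '' s
  have hsplit : range (signVector ℓ) ⊆ (Fin.snoc · 0) '' A {x | a x = 0} ∪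
      ((Fin.snoc · 1) '' A {x | 0 < a x} ∪ (Fin.snoc · (-1)) '' A {x | a x < 0}) := by
    rintro _ ⟨x, rfl⟩
    rw [← Fin.snoc_init_self (signVector ℓ x)]
    have hinit : Fin.init (signVector ℓ x) = signVector (Fin.init ℓ) x := rfl
    rcases lt_trichotomy (a x) 0 with hx | hx | hx
    · exact .inr (.inr ⟨_, ⟨x, hx, hinit.symm⟩, by simp [signVector, a, hx]⟩)
    · exact .inl ⟨_, ⟨x, hx, hinit.symm⟩, by simp [signVector, a, hx]⟩
    · exact .inr (.inl ⟨_, ⟨x, hx, hinit.symm⟩, by simp [signVector, a, hx]⟩)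
  have hunion : A {x | 0 < a x} ∪ A {x | a x < 0} ⊆ range (signVector (Fin.init ℓ)) :=
    union_subset (image_subset_range _ _) (image_subset_range _ _)
  have hinter : A {x | 0 < a x} ∩ A {x | a x < 0} ⊆ A {x | a x = 0} :=
    signVector_image_pos_inter_neg_subset (Fin.init ℓ) a
  have hsnoc (s : SignType) := Fin.snoc_left_injective (α := fun _ : Fin (m + 1) => SignType) s
  calc (range (signVector ℓ)).ncard
      ≤ (A {x | a x = 0}).ncard + ((A {x | 0 < a x}).ncard + (A {x | a x < 0}).ncard) := by
        refine (ncard_le_ncard hsplit (toFinite _)).trans ((ncard_union_le _ _).trans ?_)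
        rw [(hsnoc 0).injOn.ncard_image]
        gcongr
        refine (ncard_union_le _ _).trans_eq ?_
        rw [(hsnoc 1).injOn.ncard_image, (hsnoc (-1)).injOn.ncard_image]
    _ = (A {x | a x = 0}).ncard + ((A {x | 0 < a x} ∪ A {x | a x < 0}).ncard +
          (A {x | 0 < a x} ∩ A {x | a x < 0}).ncard) := by
        rw [ncard_union_add_ncard_inter _ _ (toFinite _) (toFinite _)]
    _ ≤ (range (signVector (Fin.init ℓ))).ncard + 2 * (A {x | a x = 0}).ncard := by
        have := ncard_le_ncard hunion (toFinite _)
        have := ncard_le_ncard hinter (toFinite _)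
        omega

theorem ncard_range_signVector_le {m n : ℕ} [FiniteDimensional ℝ V] (hV : finrank ℝ V ≤ n)
    (ℓ : Fin m → V →ᵃ[ℝ] ℝ) : (range (signVector ℓ)).ncard ≤ signVectorBound m n := by
  induction m generalizing n V with
  | zero => simpa using ncard_le_one_of_subsingleton (range (signVector ℓ))
  | succ m ih =>
    cases n with
    | zero =>
      have : Subsingleton V := finrank_zero_iff.mp (Nat.le_zero.mp hV)
      simpa using subsingleton_range (signVector ℓ)
    | succ n =>
      set a := ℓ (Fin.last m)
      by_cases ha : a.linear = 0
      · calc (range (signVector ℓ)).ncard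
            ≤ (range (signVector (Fin.init ℓ))).ncard :=
              ncard_range_signVector_le_of_linear_eq_zero ℓ ha
          _ ≤ signVectorBound m (n + 1) := ih hV _
          _ ≤ signVectorBound (m + 1) (n + 1) := signVectorBound_mono_left m.le_succ _
      · obtain ⟨e, he⟩ := a.exists_range_eq_preimage_singleton
          ((a.linear_surjective_iff.mp (LinearMap.surjective_iff_ne_zero.mpr ha)) 0)
        have hK : finrank ℝ (LinearMap.ker a.linear) ≤ n := by
          have := Module.Dual.finrank_ker_add_one_of_ne_zero ha
          omega
        have hzero : (signVector (Fin.init ℓ) '' (a ⁻¹' {0})).ncard ≤ signVectorBound m n := by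
          rw [← he, ← range_comp]
          exact ih hK fun k => (Fin.init ℓ k).comp e
        calc (range (signVector ℓ)).ncard
            ≤ (range (signVector (Fin.init ℓ))).ncard +
                2 * (signVector (Fin.init ℓ) '' (a ⁻¹' {0})).ncard :=
              ncard_range_signVector_succ_le ℓ
          _ ≤ signVectorBound m (n + 1) + 2 * signVectorBound m n := by
              gcongr
              exact ih hV _
          _ = signVectorBound (m + 1) (n + 1) := (signVectorBound_succ_succ m n).symm

end SignVector

theorem extended_regions_card_le_exp_general
    (n m : ℕ) (hm : 1 ≤ m)
    (f : Fin m → ((Fin n → ℝ) →ₗ[ℝ] ℝ))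
    (c : Fin m → ℝ) :
    (∀ I : Finset (Fin m), Finite (ConnectedComponents
      ↥((⋂ k ∈ I, {x : Fin n → ℝ | f k x = c k}) \
        (⋃ k ∈ Iᶜ, {x : Fin n → ℝ | f k x = c k})))) ∧
    ((∑ I : Finset (Fin m),
        Nat.card (ConnectedComponents
          ↥((⋂ k ∈ I, {x : Fin n → ℝ | f k x = c k}) \
            (⋃ k ∈ Iᶜ, {x : Fin n → ℝ | f k x = c k}))) : ℕ) : ℝ)
      ≤ Real.exp 2 * (m : ℝ) ^ n := by
  set ℓ : Fin m → (Fin n → ℝ) →ᵃ[ℝ] ℝ :=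
    fun k => (f k).toAffineMap - AffineMap.const ℝ _ (c k)
  set zeros : (Fin m → SignType) → Finset (Fin m) := fun σ => {k | σ k = 0}
  have hregion (I : Finset (Fin m)) : (⋂ k ∈ I, {x : Fin n → ℝ | f k x = c k}) \
      (⋃ k ∈ Iᶜ, {x | f k x = c k}) = signVector ℓ ⁻¹' (zeros ⁻¹' {I}) := by
    ext x
    simp only [ℓ, zeros, signVector, mem_sdiff, mem_iInter, mem_iUnion, mem_ofPred_eq,
      Finset.mem_compl, mem_preimage, mem_singleton_iff, Finset.ext_iff, Finset.mem_filter,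
      Finset.mem_univ, true_and, sign_eq_zero_iff, AffineMap.coe_sub, LinearMap.coe_toAffineMap,
      AffineMap.coe_const, Pi.sub_apply, Function.const_apply, sub_eq_zero, exists_prop,
      not_exists, not_and]
    exact ⟨fun ⟨h₁, h₂⟩ k => ⟨not_imp_not.mp (h₂ k), h₁ k⟩,
      fun h => ⟨fun k => (h k).2, fun k => mt (h k).1⟩⟩
  choose g hg using fun I =>
    exists_surjective_connectedComponents_of_eq_signVector_preimage ℓ (hregion I)
  refine ⟨fun I => Finite.of_surjective _ (hg I), ?_⟩
  calc _ ≤ (signVectorBound m n : ℝ) := by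
        norm_cast
        calc _
            ≤ ∑ I, (range (signVector ℓ) ∩ zeros ⁻¹' {I}).ncard :=
              Finset.sum_le_sum fun I _ => Nat.card_le_card_of_surjective _ (hg I)
          _ = (range (signVector ℓ)).ncard :=
              (ncard_eq_sum_ncard_inter_preimage_singleton (toFinite _) zeros).symm
          _ ≤ signVectorBound m n := ncard_range_signVector_le (by simp) ℓ
    _ ≤ Real.exp 2 * m ^ n := signVectorBound_le_exp_two_mul_pow hm n

/-- The total number of extended regions defined by m ≥ 1 affine hyperplanes
in ℝ^n is at most e² · mⁿ. -/
theorem extended_regions_card_le_exp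
    (n m : ℕ) (hm : 1 ≤ m)
    (f : Fin m → ((Fin n → ℝ) →ₗ[ℝ] ℝ))
    (hf : ∀ k, f k ≠ 0)
    (c : Fin m → ℝ) :
    (∀ I : Finset (Fin m), Finite (ConnectedComponents
      ↥((⋂ k ∈ I, {x : Fin n → ℝ | f k x = c k}) \
        (⋃ k ∈ Iᶜ, {x : Fin n → ℝ | f k x = c k})))) ∧
    ((∑ I : Finset (Fin m),
        Nat.card (ConnectedComponents
          ↥((⋂ k ∈ I, {x : Fin n → ℝ | f k x = c k}) \
            (⋃ k ∈ Iᶜ, {x : Fin n → ℝ | f k x = c k}))) : ℕ) : ℝ)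
      ≤ Real.exp 2 * (m : ℝ) ^ n :=
  extended_regions_card_le_exp_general n m hm f c
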